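/- arXiv:2305.14027 — 2 statements merged into one kernel-verified Lean document; each statement's English description precedes it below -/
import Mathlib

section
/- The graph B_n, obtained from two disjoint copies of K_n joined by a perfect matching of n edges, is generically universally rigid in R^1 for all n ≥ 4. -/
/-- Two frameworks (one on the line, one in `ℝ^d`) are equivalent if corresponding
edge lengths agree. -/
def FrameworkEquiv {V : Type*} (G : SimpleGraph V) {d : ℕ}
    (p : V → ℝ) (q : V → EuclideanSpace ℝ (Fin d)) : Prop :=
  ∀ ⦃u v : V⦄, G.Adj u v → dist (q u) (q v) = dist (p u) (p v)

/-- Two frameworks are congruent if all pairwise distances agree. -/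
def FrameworkCongr {V : Type*} {d : ℕ}
    (p : V → ℝ) (q : V → EuclideanSpace ℝ (Fin d)) : Prop :=
  ∀ u v : V, dist (q u) (q v) = dist (p u) (p v)

/-- A 1-dimensional framework `(G,p)` is universally rigid if every equivalent
realization of `G` in any dimension is congruent to it. -/
def UniversallyRigid {V : Type*} (G : SimpleGraph V) (p : V → ℝ) : Prop :=
  ∀ (d : ℕ) (q : V → EuclideanSpace ℝ (Fin d)), FrameworkEquiv G p q → FrameworkCongr p q

/-- A 1-dimensional configuration is generic if its coordinates are algebraically
independent over `ℚ`. -/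
def GenericConfig {V : Type*} (p : V → ℝ) : Prop :=
  AlgebraicIndependent ℚ p

/-- A graph is generically universally rigid in `ℝ¹` if every generic 1-dimensional
realization is universally rigid. -/
def GenUnivRigid {V : Type*} (G : SimpleGraph V) : Prop :=
  ∀ p : V → ℝ, GenericConfig p → UniversallyRigid G p

/-- `B_n`: two disjoint copies of `K_n` joined by a perfect matching. -/
def matchingJoin (n : ℕ) : SimpleGraph (Fin n ⊕ Fin n) where
  Adj x y := match x, y with
    | .inl a, .inl b => a ≠ b
    | .inr a, .inr b => a ≠ b
    | .inl a, .inr b => a = b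
    | .inr a, .inl b => a = b
  symm := ⟨by rintro (a|a) (b|b) h <;> exact h.symm⟩
  loopless := ⟨by rintro (a|a) h <;> simp at h⟩

/-! Each copy of `K_n` is complete, so an equivalent realization `q` keeps all distances inside
a copy, which forces the copy onto a line: with `x := p ∘ inl`, `y := p ∘ inr` we get
`q (inl a) = A + x a • u` and `q (inr a) = B + y a • v` for unit vectors `u`, `v`.
The matching edge at `a` then says
`‖A - B‖² + 2 x a ⟪A - B, u⟫ - 2 y a ⟪A - B, v⟫ + 2 x a y a (1 - ⟪u, v⟫) = 0`,
a linear equation with coefficient row `(1, x a, y a, x a y a)`. For four matching edges the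
determinant of these rows is a polynomial that equals `1` at the unit square, so it does not
vanish at generic coordinates. Hence `A = B` and `⟪u, v⟫ = 1`, i.e. `u = v`: both copies lie on
one line, parametrized by `p` itself. -/

open RealInnerProductSpace MvPolynomial
open scoped Matrix

section Bilinear

variable {R : Type*} [CommRing R]

def bilinMatrix (x y : Fin 4 → R) : Matrix (Fin 4) (Fin 4) R :=
  Matrix.of fun a => ![1, x a, y a, x a * y a]

theorem bilinMatrix_map {S F : Type*} [CommRing S] [FunLike F R S] [RingHomClass F R S]
    (f : F) (x y : Fin 4 → R) : (bilinMatrix x y).map f = bilinMatrix (f ∘ x) (f ∘ y) := by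
  ext a j
  fin_cases j <;> simp [bilinMatrix]

theorem det_bilinMatrix_unitSquare :
    (bilinMatrix ![0, 1, 0, 1] ![0, 0, 1, 1] : Matrix (Fin 4) (Fin 4) R).det = 1 := by
  simp [bilinMatrix, Matrix.det_succ_row_zero, Fin.sum_univ_succ]

end Bilinear

theorem AlgebraicIndependent.det_map_aeval_ne_zero {R A σ ι : Type*} [CommRing R] [CommRing A]
    [Algebra R A] [Fintype ι] [DecidableEq ι] {p : σ → A} (hp : AlgebraicIndependent R p)
    (M : Matrix ι ι (MvPolynomial σ R)) {r : σ → R} (hr : (M.map (eval r)).det ≠ 0) :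
    (M.map (aeval p)).det ≠ 0 := by
  rw [← AlgHom.mapMatrix_apply, ← AlgHom.map_det]
  intro hM
  rw [← RingHom.mapMatrix_apply, ← RingHom.map_det, hp.eq_zero_of_aeval_eq_zero _ hM,
    map_zero] at hr
  exact hr rfl

theorem det_bilinMatrix_ne_zero {p : Fin 4 ⊕ Fin 4 → ℝ} (hp : AlgebraicIndependent ℚ p) :
    (bilinMatrix (p ∘ Sum.inl) (p ∘ Sum.inr)).det ≠ 0 := by
  have := hp.det_map_aeval_ne_zero (bilinMatrix (X ∘ Sum.inl) (X ∘ Sum.inr))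
    (r := Sum.elim ![0, 1, 0, 1] ![0, 0, 1, 1])
  simpa [bilinMatrix_map, Function.comp_def, det_bilinMatrix_unitSquare] using this

section InnerProductSpace

variable {E : Type*} [NormedAddCommGroup E] [InnerProductSpace ℝ E]

theorem exists_eq_add_smul_of_norm_sub_eq_abs {ι : Type*} {x : ι → ℝ} {q : ι → E}
    (h : ∀ i j, ‖q i - q j‖ = |x i - x j|) {i₀ i₁ : ι} (hx : x i₀ ≠ x i₁) :
    ∃ A u : E, ‖u‖ = 1 ∧ ∀ i, q i = A + x i • u := by
  have hsq : ∀ i j, ‖q i - q j‖ ^ 2 = (x i - x j) ^ 2 := fun i j => by rw [h, sq_abs]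
  have hs : x i₁ - x i₀ ≠ 0 := sub_ne_zero.mpr hx.symm
  set u := (x i₁ - x i₀)⁻¹ • (q i₁ - q i₀)
  have hu : ‖u‖ = 1 := by
    rw [norm_smul, h, norm_inv, Real.norm_eq_abs, inv_mul_cancel₀ (abs_ne_zero.mpr hs)]
  have hinner : ∀ i, ⟪q i - q i₀, u⟫ = x i - x i₀ := by
    intro i
    have hpolar := hsq i i₁
    rw [← sub_sub_sub_cancel_right _ _ (q i₀), norm_sub_sq_real, hsq, hsq] at hpolar
    rw [real_inner_smul_right]
    field_simp
    linarith
  refine ⟨q i₀ - x i₀ • u, u, hu, fun i => ?_⟩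
  suffices ‖(q i - q i₀) - (x i - x i₀) • u‖ ^ 2 = 0 by
    rw [sq_eq_zero_iff, norm_eq_zero, sub_eq_zero, sub_smul] at this
    rw [← sub_eq_iff_eq_add', ← sub_add, this]
    abel
  rw [norm_sub_sq_real, real_inner_smul_right, hinner, norm_smul, hu, hsq, Real.norm_eq_abs,
    mul_one, sq_abs]
  ring

theorem norm_add_smul_sub_smul_sq {D u v : E} (hu : ‖u‖ = 1) (hv : ‖v‖ = 1) (s t : ℝ) :
    ‖D + s • u - t • v‖ ^ 2 =
      ‖D‖ ^ 2 + s ^ 2 + t ^ 2 + 2 * s * ⟪D, u⟫ - 2 * t * ⟪D, v⟫ - 2 * s * t * ⟪u, v⟫ := by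
  have hu2 : ⟪u, u⟫ = 1 := by rw [real_inner_self_eq_norm_sq, hu, one_pow]
  have hv2 : ⟪v, v⟫ = 1 := by rw [real_inner_self_eq_norm_sq, hv, one_pow]
  simp only [← real_inner_self_eq_norm_sq, inner_add_left, inner_add_right, inner_sub_left,
    inner_sub_right, real_inner_smul_left, real_inner_smul_right, hu2, hv2,
    real_inner_comm D u, real_inner_comm D v, real_inner_comm u v]
  ring

theorem eq_and_eq_of_norm_add_smul_sub_add_smul {A B u v : E} (hu : ‖u‖ = 1) (hv : ‖v‖ = 1)
    {x y : Fin 4 → ℝ} (hdet : (bilinMatrix x y).det ≠ 0)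
    (h : ∀ a, ‖A + x a • u - (B + y a • v)‖ = |x a - y a|) :
    A = B ∧ u = v := by
  set w : Fin 4 → ℝ := ![‖A - B‖ ^ 2, 2 * ⟪A - B, u⟫, -2 * ⟪A - B, v⟫, 2 * (1 - ⟪u, v⟫)]
  have hw : bilinMatrix x y *ᵥ w = 0 := by
    funext a
    have hsq := norm_add_smul_sub_smul_sq (D := A - B) hu hv (x a) (y a)
    rw [show A - B + x a • u - y a • v = A + x a • u - (B + y a • v) by abel, h, sq_abs] at hsq
    simp only [Matrix.mulVec, dotProduct, bilinMatrix, Matrix.of_apply, Fin.sum_univ_four,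
      Matrix.cons_val_zero, Matrix.cons_val_one, Matrix.cons_val, Pi.zero_apply, w]
    linear_combination -hsq
  have hw0 := Matrix.eq_zero_of_mulVec_eq_zero hdet hw
  have hAB : ‖A - B‖ ^ 2 = 0 := congrFun hw0 0
  have huv : 2 * (1 - ⟪u, v⟫) = 0 := congrFun hw0 3
  refine ⟨?_, (inner_eq_one_iff_of_norm_eq_one (𝕜 := ℝ) hu hv).mp (by linarith)⟩
  rwa [sq_eq_zero_iff, norm_eq_zero, sub_eq_zero] at hAB

end InnerProductSpace

theorem FrameworkEquiv.norm_sub_eq_abs_of_pairwise {V ι : Type*} {G : SimpleGraph V} {d : ℕ}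
    {p : V → ℝ} {q : V → EuclideanSpace ℝ (Fin d)} (h : FrameworkEquiv G p q) {f : ι → V}
    (hf : Pairwise fun i j => G.Adj (f i) (f j)) (i j : ι) :
    ‖q (f i) - q (f j)‖ = |p (f i) - p (f j)| := by
  rcases eq_or_ne i j with rfl | hij
  · simp
  · rw [← dist_eq_norm, ← Real.dist_eq]
    exact h (hf hij)

theorem frameworkCongr_of_eq_add_smul {V : Type*} {d : ℕ} {p : V → ℝ}
    {q : V → EuclideanSpace ℝ (Fin d)} {A u : EuclideanSpace ℝ (Fin d)} (hu : ‖u‖ = 1)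
    (hq : ∀ w, q w = A + p w • u) : FrameworkCongr p q := by
  intro w₁ w₂
  rw [dist_eq_norm, hq, hq, add_sub_add_left_eq_sub, ← sub_smul, norm_smul, hu, mul_one,
    Real.dist_eq, Real.norm_eq_abs]

/-- `B_n` is generically universally rigid in `ℝ¹` for `n ≥ 4`. -/
theorem Bn_genUnivRigid (n : ℕ) (hn : 4 ≤ n) :
    GenUnivRigid (matchingJoin n) := by
  intro p hp d q hq
  obtain ⟨A, u, hu, hA⟩ := exists_eq_add_smul_of_norm_sub_eq_abs
    (hq.norm_sub_eq_abs_of_pairwise (f := Sum.inl) fun _ _ => id)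
    (i₀ := ⟨0, by omega⟩) (i₁ := ⟨1, by omega⟩) (hp.injective.ne (by simp))
  obtain ⟨B, v, hv, hB⟩ := exists_eq_add_smul_of_norm_sub_eq_abs
    (hq.norm_sub_eq_abs_of_pairwise (f := Sum.inr) fun _ _ => id)
    (i₀ := ⟨0, by omega⟩) (i₁ := ⟨1, by omega⟩) (hp.injective.ne (by simp))
  let e := (Fin.castLEEmb hn).sumMap (Fin.castLEEmb hn)
  have hmatching (a : Fin 4) : ‖A + p (.inl (a.castLE hn)) • u - (B + p (.inr (a.castLE hn)) • v)‖
      = |p (.inl (a.castLE hn)) - p (.inr (a.castLE hn))| := by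
    rw [← hA, ← hB, ← dist_eq_norm, ← Real.dist_eq]
    exact hq (show (matchingJoin n).Adj (.inl _) (.inr _) from rfl)
  obtain ⟨rfl, rfl⟩ : A = B ∧ u = v := eq_and_eq_of_norm_add_smul_sub_add_smul hu hv
    (det_bilinMatrix_ne_zero (hp.comp e e.injective)) hmatching
  exact frameworkCongr_of_eq_add_smul hu (Sum.rec hA hB)
end

section
/- For n ≥ 4, every quasi-injective 1-dimensional realization of the graph K_{n−2,2}+e (the complete bipartite graph with parts of sizes n−2 and 2, plus the edge joining the two vertices of the small part) is universally rigid; this graph has exactly 2n − 3 edges, showing the bound |E| ≥ 2|V| − 3 is tight for quasi-injective universal rigidity. -/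
/-- The graph `K_(m,2) + e`: complete bipartite with parts `Fin m` and `Fin 2`,
plus the edge joining the two vertices of the small part. -/
def Km2e (m : ℕ) : SimpleGraph (Fin m ⊕ Fin 2) where
  Adj x y := match x, y with
    | .inl _, .inl _ => False
    | .inr a, .inr b => a ≠ b
    | .inl _, .inr _ => True
    | .inr _, .inl _ => True
  symm := ⟨by rintro (a|a) (b|b) h <;> first | exact h.elim | exact h.symm | trivial⟩
  loopless := ⟨by rintro (a|a) h <;> simp at h⟩


/-! Let `x`, `y` be the two vertices of the small part; they are adjacent to every other
vertex and `p x ≠ p y`. In an equivalent realization `q`, each `q v` has the distances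
`|p v - p x|`, `|p v - p y|` to `q x`, `q y`, which lie at distance `|p y - p x|`. Expanding
`‖(q v - q x) - t • (q y - q x)‖²` with `t = (p v - p x) / (p y - p x)` gives `0`, so `q`
places every vertex on the line through `q x`, `q y` exactly as `p` does, and `q` is
congruent to `p`.
The edge count is that of `K_{m,2}` plus one. -/

open RealInnerProductSpace in
theorem eq_lineMap_of_dist_eq {E : Type*} [NormedAddCommGroup E] [InnerProductSpace ℝ E]
    {A B X : E} {a b x : ℝ} (hab : a ≠ b) (hAB : dist A B = dist a b)
    (hXA : dist X A = dist x a) (hXB : dist X B = dist x b) :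
    X = AffineMap.lineMap A B ((x - a) / (b - a)) := by
  have hba : b - a ≠ 0 := sub_ne_zero.mpr hab.symm
  set u := X - A
  set w := B - A
  have hw : ‖w‖ ^ 2 = (b - a) ^ 2 := by
    rw [← dist_eq_norm, dist_comm, hAB, Real.dist_eq, sq_abs]; ring
  have hu : ‖u‖ ^ 2 = (x - a) ^ 2 := by rw [← dist_eq_norm, hXA, Real.dist_eq, sq_abs]
  have huw : ‖u - w‖ ^ 2 = (x - b) ^ 2 := by
    rw [sub_sub_sub_cancel_right, ← dist_eq_norm, hXB, Real.dist_eq, sq_abs]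
  have hinner : ⟪u, w⟫ = (x - a) * (b - a) := by
    have := norm_sub_sq_real u w
    rw [huw, hu, hw] at this
    linarith
  have hzero : ‖u - ((x - a) / (b - a)) • w‖ ^ 2 = 0 := by
    rw [norm_sub_sq_real, real_inner_smul_right, hinner, norm_smul, mul_pow, hu, hw,
      Real.norm_eq_abs, sq_abs]
    field_simp
    ring
  have hu_eq : u = ((x - a) / (b - a)) • w :=
    sub_eq_zero.mp (norm_eq_zero.mp (pow_eq_zero_iff two_ne_zero |>.mp hzero))
  rw [AffineMap.lineMap_apply, vsub_eq_sub, vadd_eq_add, ← hu_eq, sub_add_cancel]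

theorem FrameworkEquiv.dist_eq_of_forall_adj {V : Type*} {G : SimpleGraph V} {d : ℕ}
    {p : V → ℝ} {q : V → EuclideanSpace ℝ (Fin d)} (hq : FrameworkEquiv G p q) {x : V}
    (hx : ∀ v, v ≠ x → G.Adj v x) (v : V) : dist (q v) (q x) = dist (p v) (p x) := by
  by_cases h : v = x
  · simp [h]
  · exact hq (hx v h)

theorem universallyRigid_of_two_universal_vertices {V : Type*} {G : SimpleGraph V}
    {p : V → ℝ} {x y : V} (hp : p x ≠ p y) (hx : ∀ v, v ≠ x → G.Adj v x)
    (hy : ∀ v, v ≠ y → G.Adj v y) : UniversallyRigid G p := by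
  intro d q hq u v
  have hline : ∀ v, q v = AffineMap.lineMap (q x) (q y) ((p v - p x) / (p y - p x)) :=
    fun v ↦ eq_lineMap_of_dist_eq hp (hq.dist_eq_of_forall_adj hy x)
      (hq.dist_eq_of_forall_adj hx v) (hq.dist_eq_of_forall_adj hy v)
  have hpyx : p y - p x ≠ 0 := sub_ne_zero.mpr hp.symm
  rw [hline u, hline v, dist_lineMap_lineMap, hq.dist_eq_of_forall_adj hy x, Real.dist_eq,
    Real.dist_eq, Real.dist_eq, ← sub_div, abs_div, abs_sub_comm (p x),
    sub_sub_sub_cancel_right, div_mul_cancel₀ _ (abs_ne_zero.mpr hpyx)]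

theorem Km2e_adj_inr_of_ne {m : ℕ} {j : Fin 2} :
    ∀ v, v ≠ .inr j → (Km2e m).Adj v (.inr j)
  | .inl _, _ => trivial
  | .inr _, h => fun hk ↦ h (congrArg _ hk)

open SimpleGraph in
theorem Km2e_eq_completeBipartiteGraph_sup_edge (m : ℕ) :
    Km2e m = completeBipartiteGraph (Fin m) (Fin 2) ⊔ edge (.inr 0) (.inr 1) := by
  ext (i | j) (k | l) <;> simp [Km2e, edge_adj]
  omega

open SimpleGraph in
theorem natCard_edgeSet_Km2e (m : ℕ) : Nat.card (Km2e m).edgeSet = 2 * m + 1 := by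
  rw [Km2e_eq_completeBipartiteGraph_sup_edge, Nat.card_coe_set_eq, edgeSet_sup,
    edgeSet_edge_of_ne (by simp), Set.union_singleton, Set.ncard_insert_of_notMem (by simp),
    Set.ncard_def, encard_edgeSet_completeBipartiteGraph]
  simp [mul_comm]

/-- For `n ≥ 4`, `K_(n−2,2) + e` has exactly `2n − 3` edges and every
quasi-injective 1-dimensional realization of it is universally rigid. -/
theorem Km2e_quasiInjective_univRigid (n : ℕ) (hn : 4 ≤ n) :
    Nat.card (Km2e (n - 2)).edgeSet = 2 * n - 3 ∧
      ∀ p : (Fin (n - 2) ⊕ Fin 2) → ℝ,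
        (∀ ⦃u v⦄, (Km2e (n - 2)).Adj u v → p u ≠ p v) →
        UniversallyRigid (Km2e (n - 2)) p := by
  refine ⟨by rw [natCard_edgeSet_Km2e]; omega, fun p hp ↦ ?_⟩
  have hsmall : p (.inr 0) ≠ p (.inr 1) := hp (Km2e_adj_inr_of_ne _ (by simp))
  exact universallyRigid_of_two_universal_vertices hsmall Km2e_adj_inr_of_ne Km2e_adj_inr_of_ne
end
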